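/- arXiv:1504.08117 — 2 statements merged into one kernel-verified Lean document; each statement's English description precedes it below -/
import Mathlib

section
/- Let n ≥ 1 and let Q be an n×n real matrix with all entries nonnegative. Suppose there exists u ∈ ℝ^n with u ≥ 0 entrywise, u ≠ 0, and uᵀQ = ρ(Q)·uᵀ (a nonnegative left eigenvector for the spectral radius). Let q₀ ∈ ℝ^n have all entries strictly positive and let w ∈ ℝ^n have all entries strictly positive. Then lim_{t→∞} (q₀ᵀQᵗw / q₀ᵀw)^(1/t) = ρ(Q). (Theorem 1, part 3: under random initialization, the average convergence rate R(t) converges to 1 − ρ(Q).) -/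
/-!
The sequence is squeezed between two geometric-type bounds. From below, pick `α > 0` with
`α • u ≤ q₀`; since `Qᵗ w ≥ 0`, `q₀ ⬝ᵥ Qᵗ w ≥ α (u ᵥ* Qᵗ) ⬝ᵥ w = α ρᵗ (u ⬝ᵥ w)`. From above,
`q₀ ⬝ᵥ Qᵗ w ≤ C ‖Qᵗ‖` for the `ℓ∞`-operator norm, and Gelfand's formula for the complexified
matrix (which has the same norm) gives `‖Qᵗ‖ ^ (1 / t) → ρ(Q)`. Positive constant factors
disappear under the `t`-th root.
-/

open Matrix Filter

/-- The spectral radius of a real matrix: the supremum of the moduli of its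
complex eigenvalues. -/
noncomputable def specRad (n : ℕ) (Q : Matrix (Fin n) (Fin n) ℝ) : ℝ :=
  sSup {r : ℝ | ∃ μ ∈ spectrum ℂ (Q.map Complex.ofReal), r = ‖μ‖}

open scoped NNReal ENNReal Topology

attribute [local instance] Matrix.linftyOpNormedAddCommGroup Matrix.linftyOpNormedRing
  Matrix.linftyOpNormedAlgebra

theorem tendsto_const_mul_rpow_one_div {b : ℕ → ℝ} {ρ c : ℝ} (hc : 0 < c) (hb0 : ∀ t, 0 ≤ b t)
    (hb : Tendsto (fun t : ℕ => b t ^ (1 / t : ℝ)) atTop (𝓝 ρ)) :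
    Tendsto (fun t : ℕ => (c * b t) ^ (1 / t : ℝ)) atTop (𝓝 ρ) := by
  have hc1 : Tendsto (fun t : ℕ => c ^ (1 / t : ℝ)) atTop (𝓝 1) := by
    simpa [Function.comp_def] using ((Real.continuousAt_const_rpow hc.ne').tendsto.comp
      tendsto_one_div_atTop_nhds_zero_nat)
  simpa [Real.mul_rpow hc.le (hb0 _)] using hc1.mul hb

theorem tendsto_rpow_one_div_of_le_of_le {a b : ℕ → ℝ} {ρ c C : ℝ} (hρ : 0 ≤ ρ) (hc : 0 < c)
    (hb0 : ∀ t, 0 ≤ b t) (hb : Tendsto (fun t : ℕ => b t ^ (1 / t : ℝ)) atTop (𝓝 ρ))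
    (hlow : ∀ t, c * ρ ^ t ≤ a t) (hup : ∀ t, a t ≤ C * b t) :
    Tendsto (fun t : ℕ => a t ^ (1 / t : ℝ)) atTop (𝓝 ρ) := by
  have hpow : Tendsto (fun t : ℕ => (ρ ^ t) ^ (1 / t : ℝ)) atTop (𝓝 ρ) :=
    tendsto_const_nhds.congr' <| (eventually_ne_atTop 0).mono fun t ht => by
      dsimp only
      rw [one_div, Real.pow_rpow_inv_natCast hρ ht]
  have hlow' (t : ℕ) : 0 ≤ c * ρ ^ t := by positivity
  have hup' (t : ℕ) : a t ≤ max C 1 * b t :=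
    (hup t).trans (mul_le_mul_of_nonneg_right (le_max_left C 1) (hb0 t))
  refine tendsto_of_tendsto_of_tendsto_of_le_of_le
    (tendsto_const_mul_rpow_one_div hc (fun t => pow_nonneg hρ t) hpow)
    (tendsto_const_mul_rpow_one_div (lt_max_of_lt_right one_pos : 0 < max C 1) hb0 hb)
    (fun t => ?_) (fun t => ?_)
  · exact Real.rpow_le_rpow (hlow' t) (hlow t) (by positivity)
  · exact Real.rpow_le_rpow ((hlow' t).trans (hlow t)) (hup' t) (by positivity)

section

variable {ι : Type*} [Fintype ι]

theorem exists_pos_smul_le (u : ι → ℝ) {q : ι → ℝ} (hq : ∀ i, 0 < q i) :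
    ∃ α : ℝ, 0 < α ∧ α • u ≤ q := by
  have : ∀ᶠ α in 𝓝[>] (0 : ℝ), ∀ i, α * u i < q i := eventually_all.2 fun i =>
    ((continuous_id.mul continuous_const).tendsto' 0 0 (zero_mul _)).eventually
      (gt_mem_nhds (hq i)) |>.filter_mono nhdsWithin_le_nhds
  obtain ⟨α, hαq, hα⟩ := (this.and self_mem_nhdsWithin).exists
  exact ⟨α, hα, fun i => (hαq i).le⟩

theorem dotProduct_pos_of_nonneg_of_ne_zero {u w : ι → ℝ} (hu0 : 0 ≤ u) (hu : u ≠ 0)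
    (hw : ∀ i, 0 < w i) : 0 < u ⬝ᵥ w := by
  obtain ⟨i, hi⟩ := Function.ne_iff.1 hu
  exact Finset.sum_pos' (fun j _ => mul_nonneg (hu0 j) (hw j).le)
    ⟨i, Finset.mem_univ i, mul_pos ((hu0 i).lt_of_ne' hi) (hw i)⟩

theorem vecMul_pow_of_vecMul_eq_smul {R : Type*} [CommSemiring R] [DecidableEq ι]
    {Q : Matrix ι ι R} {u : ι → R} {ρ : R} (hu : u ᵥ* Q = ρ • u) (t : ℕ) :
    u ᵥ* (Q ^ t) = ρ ^ t • u := by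
  induction t with
  | zero => simp
  | succ t ih => rw [pow_succ, ← vecMul_vecMul, ih, smul_vecMul, hu, smul_smul, pow_succ]

theorem exists_pos_mul_pow_le_dotProduct_pow_mulVec [DecidableEq ι] {Q : Matrix ι ι ℝ}
    (hQ : ∀ i j, 0 ≤ Q i j) {ρ : ℝ} {u : ι → ℝ} (hu0 : 0 ≤ u) (hune : u ≠ 0)
    (hu : u ᵥ* Q = ρ • u) {q w : ι → ℝ} (hq : ∀ i, 0 < q i) (hw : ∀ i, 0 < w i) :
    ∃ c > 0, ∀ t : ℕ, c * ρ ^ t ≤ q ⬝ᵥ (Q ^ t *ᵥ w) := by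
  obtain ⟨α, hα, hαu⟩ := exists_pos_smul_le u hq
  refine ⟨α * (u ⬝ᵥ w), mul_pos hα (dotProduct_pos_of_nonneg_of_ne_zero hu0 hune hw),
    fun t => ?_⟩
  have hQw : 0 ≤ Q ^ t *ᵥ w := fun i =>
    dotProduct_nonneg_of_nonneg (fun j => pow_apply_nonneg hQ t i j) fun j => (hw j).le
  calc α * (u ⬝ᵥ w) * ρ ^ t = (α • u) ⬝ᵥ (Q ^ t *ᵥ w) := by
        rw [smul_dotProduct, dotProduct_mulVec, vecMul_pow_of_vecMul_eq_smul hu, smul_dotProduct,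
          smul_eq_mul, smul_eq_mul]
        ring
    _ ≤ q ⬝ᵥ (Q ^ t *ᵥ w) := dotProduct_le_dotProduct_of_nonneg_right hαu hQw

theorem dotProduct_le_sum_abs_mul_norm (q v : ι → ℝ) : q ⬝ᵥ v ≤ (∑ i, |q i|) * ‖v‖ := by
  rw [dotProduct, Finset.sum_mul]
  refine Finset.sum_le_sum fun i _ => ?_
  calc q i * v i ≤ |q i| * |v i| := (le_abs_self _).trans (abs_mul _ _).le
    _ ≤ |q i| * ‖v‖ := mul_le_mul_of_nonneg_left (norm_le_pi_norm v i) (abs_nonneg _)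

theorem dotProduct_mulVec_le_linfty_opNorm {κ : Type*} [Fintype κ] (q : ι → ℝ)
    (M : Matrix ι κ ℝ) (w : κ → ℝ) : q ⬝ᵥ (M *ᵥ w) ≤ (∑ i, |q i|) * ‖w‖ * ‖M‖ := by
  calc q ⬝ᵥ (M *ᵥ w) ≤ (∑ i, |q i|) * ‖M *ᵥ w‖ := dotProduct_le_sum_abs_mul_norm q _
    _ ≤ (∑ i, |q i|) * (‖M‖ * ‖w‖) :=
        mul_le_mul_of_nonneg_left (linfty_opNorm_mulVec M w) (by positivity)
    _ = (∑ i, |q i|) * ‖w‖ * ‖M‖ := by ring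

end

theorem Matrix.linfty_opNorm_map_ofReal {m n : Type*} [Fintype m] [Fintype n]
    (A : Matrix m n ℝ) : ‖A.map ((↑) : ℝ → ℂ)‖ = ‖A‖ := by
  simp only [linfty_opNorm_def, map_apply, Complex.nnnorm_real]

theorem specRad_nonneg (n : ℕ) (Q : Matrix (Fin n) (Fin n) ℝ) : 0 ≤ specRad n Q :=
  Real.sSup_nonneg fun _ ⟨_, _, hr⟩ => hr ▸ norm_nonneg _

theorem specRad_eq_toReal_spectralRadius {n : ℕ} [NeZero n] (Q : Matrix (Fin n) (Fin n) ℝ) :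
    specRad n Q = (spectralRadius ℂ (Q.map ((↑) : ℝ → ℂ))).toReal := by
  have : CompleteSpace (Matrix (Fin n) (Fin n) ℂ) := FiniteDimensional.complete ℂ _
  obtain ⟨z, hz, hzρ⟩ := spectrum.exists_nnnorm_eq_spectralRadius (Q.map ((↑) : ℝ → ℂ))
  rw [← hzρ, ENNReal.coe_toReal, coe_nnnorm]
  refine IsGreatest.csSup_eq ⟨⟨z, hz, rfl⟩, ?_⟩
  rintro _ ⟨μ, hμ, rfl⟩
  have : (‖μ‖₊ : ℝ≥0∞) ≤ ‖z‖₊ := hzρ ▸ le_iSup₂ (α := ℝ≥0∞) μ hμ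
  exact_mod_cast this

theorem tendsto_norm_pow_rpow_one_div_specRad {n : ℕ} [NeZero n]
    (Q : Matrix (Fin n) (Fin n) ℝ) :
    Tendsto (fun t : ℕ => ‖Q ^ t‖ ^ (1 / t : ℝ)) atTop (𝓝 (specRad n Q)) := by
  have : CompleteSpace (Matrix (Fin n) (Fin n) ℂ) := FiniteDimensional.complete ℂ _
  set A := Q.map ((↑) : ℝ → ℂ)
  have hA : spectralRadius ℂ A ≠ ∞ := by
    obtain ⟨z, -, hzρ⟩ := spectrum.exists_nnnorm_eq_spectralRadius A
    exact hzρ ▸ ENNReal.coe_ne_top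
  have hpow (t : ℕ) : ‖Q ^ t‖ = ‖A ^ t‖ := by
    rw [← linfty_opNorm_map_ofReal]
    exact congrArg _ (map_pow Complex.ofRealHom.mapMatrix Q t)
  rw [specRad_eq_toReal_spectralRadius]
  refine ((ENNReal.tendsto_toReal hA).comp
    (spectrum.pow_norm_pow_one_div_tendsto_nhds_spectralRadius A)).congr fun t => ?_
  simp [hpow, Real.rpow_nonneg]

theorem average_rate_tendsto_specRad_general (n : ℕ)
    (Q : Matrix (Fin n) (Fin n) ℝ) (hQ : ∀ i j, 0 ≤ Q i j)
    (u : Fin n → ℝ) (hu0 : ∀ i, 0 ≤ u i) (hune : u ≠ 0)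
    (hu : u ᵥ* Q = specRad n Q • u)
    (q₀ : Fin n → ℝ) (hq₀ : ∀ i, 0 < q₀ i)
    (w : Fin n → ℝ) (hw : ∀ i, 0 < w i) :
    Filter.Tendsto (fun t : ℕ => ((q₀ ⬝ᵥ ((Q ^ t) *ᵥ w)) / (q₀ ⬝ᵥ w)) ^ ((1 : ℝ) / t))
      Filter.atTop (nhds (specRad n Q)) := by
  obtain ⟨i₀, -⟩ := Function.ne_iff.1 hune
  have : NeZero n := ⟨i₀.pos.ne'⟩
  have hs : 0 < q₀ ⬝ᵥ w :=
    Finset.sum_pos (fun i _ => mul_pos (hq₀ i) (hw i)) Finset.univ_nonempty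
  obtain ⟨c, hc, hlow⟩ := exists_pos_mul_pow_le_dotProduct_pow_mulVec hQ hu0 hune hu hq₀ hw
  refine tendsto_rpow_one_div_of_le_of_le (specRad_nonneg n Q) (div_pos hc hs)
    (fun t => norm_nonneg (Q ^ t)) (tendsto_norm_pow_rpow_one_div_specRad Q)
    (C := (∑ i, |q₀ i|) * ‖w‖ / (q₀ ⬝ᵥ w)) (fun t => ?_) (fun t => ?_)
  · rw [div_mul_eq_mul_div, div_le_div_iff_of_pos_right hs]
    exact hlow t
  · rw [div_mul_eq_mul_div, div_le_div_iff_of_pos_right hs]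
    exact dotProduct_mulVec_le_linfty_opNorm q₀ (Q ^ t) w

/-- Theorem 1, part 3: under random initialization (`q₀ > 0` entrywise), the average
convergence rate `R(t)` converges to `1 - ρ(Q)`, i.e.,
`lim_{t→∞} (q₀ᵀQᵗw / q₀ᵀw)^(1/t) = ρ(Q)`. -/
theorem average_rate_tendsto_specRad (n : ℕ) (hn : 1 ≤ n)
    (Q : Matrix (Fin n) (Fin n) ℝ) (hQ : ∀ i j, 0 ≤ Q i j)
    (u : Fin n → ℝ) (hu0 : ∀ i, 0 ≤ u i) (hune : u ≠ 0)
    (hu : u ᵥ* Q = specRad n Q • u)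
    (q₀ : Fin n → ℝ) (hq₀ : ∀ i, 0 < q₀ i)
    (w : Fin n → ℝ) (hw : ∀ i, 0 < w i) :
    Filter.Tendsto (fun t : ℕ => ((q₀ ⬝ᵥ ((Q ^ t) *ᵥ w)) / (q₀ ⬝ᵥ w)) ^ ((1 : ℝ) / t))
      Filter.atTop (nhds (specRad n Q)) :=
  average_rate_tendsto_specRad_general n Q hQ u hu0 hune hu q₀ hq₀ w hw
end

section
/- Let n ≥ 1 and let Q be an n×n real matrix with all entries nonnegative and spectral radius ρ(Q) < 1. Suppose there exists v ∈ ℝ^n with v ≥ 0 entrywise, v ≠ 0, and Q·v = ρ(Q)·v (a nonnegative right eigenvector for the spectral radius). Then the matrix I − Q is invertible, and the vector m := (I − Q)⁻¹·𝟙 (where 𝟙 is the all-ones vector) satisfies max_{1 ≤ i ≤ n} m_i ≥ 1/(1 − ρ(Q)). (Theorem 2: the reciprocal of the asymptotic average convergence rate R_∞ = 1 − ρ(Q) is a lower bound on the maximal expected hitting time.) -/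
/-! Gelfand's formula turns `ρ(Q) < 1` into `Qᴺ → 0`. For `Q ≥ 0` this makes `I - Q`
inverse-monotone: if `(I - Q) x ≤ (I - Q) y` then `z = y - x` satisfies `Q z ≤ z`, hence
`Qᴺ z ≤ z` for all `N`, and `z ≥ 0` in the limit; applied to `±x` with `(I - Q) x = 0` this also
gives invertibility. If `v i` is the largest entry of `v`, then
`(I - Q) ((1 - ρ)⁻¹ v) = v ≤ (v i) 𝟙 = (I - Q) ((v i) m)`, so `(1 - ρ)⁻¹ v ≤ (v i) m`, and
entry `i` gives `m i ≥ 1 / (1 - ρ)`. -/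

open Matrix Filter

open Topology

theorem tendsto_pow_atTop_nhds_zero_of_spectralRadius_lt_one {A : Type*} [NormedRing A]
    [NormedAlgebra ℂ A] [CompleteSpace A] {a : A} (ha : spectralRadius ℂ a < 1) :
    Tendsto (a ^ ·) atTop (𝓝 0) := by
  obtain ⟨r, har, hr1⟩ := ENNReal.lt_iff_exists_nnreal_btwn.mp ha
  have hle : ∀ᶠ N in atTop, ‖a ^ N‖₊ ≤ r ^ N := by
    filter_upwards [(spectrum.gelfand_formula a).eventually_lt_const har,
      eventually_gt_atTop 0] with N hN hN0
    rw [one_div, ENNReal.rpow_inv_lt_iff (by positivity), ENNReal.rpow_natCast] at hN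
    exact_mod_cast hN.le
  refine squeeze_zero_norm' (hle.mono fun N hN => ?_)
    (tendsto_pow_atTop_nhds_zero_of_lt_one r.coe_nonneg (by exact_mod_cast hr1))
  exact_mod_cast hN

theorem spectralRadius_map_ofReal_le_specRad (n : ℕ) (Q : Matrix (Fin n) (Fin n) ℝ) :
    spectralRadius ℂ (Q.map Complex.ofReal) ≤ ENNReal.ofReal (specRad n Q) := by
  have hbdd : BddAbove {r : ℝ | ∃ μ ∈ spectrum ℂ (Q.map Complex.ofReal), r = ‖μ‖} := by
    obtain ⟨C, hC⟩ := ((Matrix.finite_spectrum (Q.map Complex.ofReal)).image (‖·‖)).bddAbove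
    exact ⟨C, by rintro r ⟨μ, hμ, rfl⟩; exact hC ⟨μ, hμ, rfl⟩⟩
  refine iSup₂_le fun μ hμ => ?_
  rw [← ENNReal.ofReal_coe_nnreal, coe_nnnorm]
  exact ENNReal.ofReal_le_ofReal (le_csSup hbdd ⟨μ, hμ, rfl⟩)

section LinftyOpNorm

attribute [local instance] Matrix.linftyOpNormedRing Matrix.linftyOpNormedAlgebra

theorem tendsto_pow_atTop_nhds_zero_of_specRad_lt_one {n : ℕ} {Q : Matrix (Fin n) (Fin n) ℝ}
    (hρ : specRad n Q < 1) : Tendsto (Q ^ ·) atTop (𝓝 0) := by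
  have hA := tendsto_pow_atTop_nhds_zero_of_spectralRadius_lt_one <|
    (spectralRadius_map_ofReal_le_specRad n Q).trans_lt (ENNReal.ofReal_lt_one.mpr hρ)
  have hre := ((continuous_id.matrix_map Complex.continuous_re).tendsto 0).comp hA
  convert hre using 1
  · ext N : 1
    have hpow : Q.map Complex.ofReal ^ N = (Q ^ N).map Complex.ofReal :=
      (map_pow Complex.ofRealHom.mapMatrix Q N).symm
    simp [hpow, Function.comp_def]
  · simp

end LinftyOpNorm

section InverseMonotone

variable {ι : Type*} [Fintype ι] [DecidableEq ι] {Q : Matrix ι ι ℝ}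

theorem nonneg_of_mulVec_le_self (hQ : ∀ i j, 0 ≤ Q i j)
    (hQN : Tendsto (Q ^ ·) atTop (𝓝 0)) {x : ι → ℝ} (hx : Q *ᵥ x ≤ x) : 0 ≤ x := by
  have hdecr : ∀ N, (Q ^ N) *ᵥ x ≤ x := by
    intro N
    induction N with
    | zero => simp
    | succ N ih =>
      calc (Q ^ (N + 1)) *ᵥ x = (Q ^ N) *ᵥ (Q *ᵥ x) := by rw [pow_succ, mulVec_mulVec]
        _ ≤ (Q ^ N) *ᵥ x := fun k =>
          dotProduct_le_dotProduct_of_nonneg_left hx (pow_apply_nonneg hQ N k)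
        _ ≤ x := ih
  have hlim : Tendsto (fun N => (Q ^ N) *ᵥ x) atTop (𝓝 0) := by
    simpa [Function.comp_def] using
      ((continuous_id.matrix_mulVec continuous_const).tendsto 0).comp hQN
  exact le_of_tendsto' hlim hdecr

theorem le_of_one_sub_mulVec_le (hQ : ∀ i j, 0 ≤ Q i j)
    (hQN : Tendsto (Q ^ ·) atTop (𝓝 0)) {x y : ι → ℝ}
    (hxy : (1 - Q) *ᵥ x ≤ (1 - Q) *ᵥ y) : x ≤ y := by
  refine sub_nonneg.mp (nonneg_of_mulVec_le_self hQ hQN fun i => ?_)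
  have hi := hxy i
  simp only [sub_mulVec, one_mulVec, mulVec_sub, Pi.sub_apply] at hi ⊢
  linarith

theorem isUnit_one_sub_of_tendsto_pow (hQ : ∀ i j, 0 ≤ Q i j)
    (hQN : Tendsto (Q ^ ·) atTop (𝓝 0)) : IsUnit (1 - Q) := by
  rw [isUnit_iff_isUnit_det, isUnit_iff_ne_zero, Ne, ← exists_mulVec_eq_zero_iff]
  rintro ⟨x, hx0, hx⟩
  have hle := le_of_one_sub_mulVec_le hQ hQN (x := x) (y := 0)
  have hge := le_of_one_sub_mulVec_le hQ hQN (x := 0) (y := x)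
  simp only [hx, mulVec_zero, le_refl, forall_const] at hle hge
  exact hx0 (le_antisymm hle hge)

end InverseMonotone

theorem hitting_time_lower_bound_general (n : ℕ)
    (Q : Matrix (Fin n) (Fin n) ℝ) (hQ : ∀ i j, 0 ≤ Q i j)
    (hρ : specRad n Q < 1)
    (v : Fin n → ℝ) (hv0 : ∀ i, 0 ≤ v i) (hvne : v ≠ 0)
    (hv : Q *ᵥ v = specRad n Q • v) :
    IsUnit (1 - Q) ∧
    ∃ i : Fin n, 1 / (1 - specRad n Q) ≤ ((1 - Q)⁻¹ *ᵥ (fun _ => (1 : ℝ))) i := by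
  set ρ := specRad n Q
  have hQN := tendsto_pow_atTop_nhds_zero_of_specRad_lt_one hρ
  have hunit := isUnit_one_sub_of_tendsto_pow hQ hQN
  refine ⟨hunit, ?_⟩
  obtain ⟨j, hj⟩ := Function.ne_iff.mp hvne
  obtain ⟨i, -, hi⟩ := Finset.exists_max_image Finset.univ v ⟨j, Finset.mem_univ j⟩
  have hvi : 0 < v i := ((hv0 j).lt_of_ne (Ne.symm hj)).trans_le (hi j (Finset.mem_univ j))
  set m := (1 - Q)⁻¹ *ᵥ fun _ => (1 : ℝ)
  have hm : (1 - Q) *ᵥ m = fun _ => 1 := by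
    rw [mulVec_mulVec, mul_nonsing_inv _ ((isUnit_iff_isUnit_det _).mp hunit), one_mulVec]
  have heig : (1 - Q) *ᵥ v = (1 - ρ) • v := by rw [sub_mulVec, one_mulVec, hv, sub_smul, one_smul]
  have hcmp : (1 - ρ)⁻¹ • v ≤ v i • m := by
    refine le_of_one_sub_mulVec_le hQ hQN ?_
    rw [mulVec_smul, mulVec_smul, heig, hm, smul_smul, inv_mul_cancel₀ (by linarith), one_smul]
    exact fun k => by simpa using hi k (Finset.mem_univ k)
  refine ⟨i, ?_⟩
  have hcmp_i : (1 - ρ)⁻¹ * v i ≤ m i * v i := by simpa [mul_comm (v i)] using hcmp i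
  rw [one_div]
  exact le_of_mul_le_mul_right hcmp_i hvi

/-- Theorem 2: for a convergent EA (`ρ(Q) < 1`, `Q ≥ 0` entrywise, with a nonnegative
nonzero eigenvector for `ρ(Q)`), the matrix `I - Q` is invertible and the maximal entry
of the expected hitting time vector `m = (I - Q)⁻¹·𝟙` is at least `1/(1 - ρ(Q))`. -/
theorem hitting_time_lower_bound (n : ℕ) (hn : 1 ≤ n)
    (Q : Matrix (Fin n) (Fin n) ℝ) (hQ : ∀ i j, 0 ≤ Q i j)
    (hρ : specRad n Q < 1)
    (v : Fin n → ℝ) (hv0 : ∀ i, 0 ≤ v i) (hvne : v ≠ 0)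
    (hv : Q *ᵥ v = specRad n Q • v) :
    IsUnit (1 - Q) ∧
    ∃ i : Fin n, 1 / (1 - specRad n Q) ≤ ((1 - Q)⁻¹ *ᵥ (fun _ => (1 : ℝ))) i :=
  hitting_time_lower_bound_general n Q hQ hρ v hv0 hvne hv
end
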